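/- arXiv:2605.21217 — 6 statements merged into one kernel-verified Lean document; each statement's English description precedes it below -/
import Mathlib

section
/- Let U ∈ ℝ^{Gq×r} have orthonormal columns, and for g ∈ 𝒢 write U^{(g)} ∈ ℝ^{q×r} for the g-th row block of U. Let P_U be the map M ↦ U Uᵀ M on ℝ^{Gq×p}, let I ⊆ 𝒢 with s := |I|, and set ρ := ‖P_I ∘ P_U ∘ P_I‖_op (operator norm with respect to the Frobenius norm on ℝ^{Gq×p}). Then ρ ≤ Σ_{g∈I} ‖U^{(g)}‖_F². In particular, if max_{g∈𝒢} ‖U^{(g)}‖_F² ≤ μr/G for some μ ≥ 1 (block incoherence), then ρ ≤ sμr/G, and s μ r / G < 1 implies ρ < 1. -/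
open Matrix

/-- The set of client pairs `𝒢 = {(j,k) : j < k}`. -/
abbrev PairIdx (K : ℕ) := {g : Fin K × Fin K // g.1 < g.2}

/-- Frobenius norm of a real matrix. -/
noncomputable def frob {m n : Type*} [Fintype m] [Fintype n] (A : Matrix m n ℝ) : ℝ :=
  Real.sqrt (∑ i, ∑ j, (A i j) ^ 2)

/-- Operator norm (w.r.t. the Frobenius norm) of a map on matrices. -/
noncomputable def opNormF {m n : Type*} [Fintype m] [Fintype n]
    (T : Matrix m n ℝ → Matrix m n ℝ) : ℝ :=
  sInf {c | 0 ≤ c ∧ ∀ M, frob (T M) ≤ c * frob M}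

/-- The 0/1 diagonal matrix `Π_I` selecting the rows of the blocks in `I`. -/
def PiMat (K q : ℕ) (I : Finset (PairIdx K)) :
    Matrix (PairIdx K × Fin q) (PairIdx K × Fin q) ℝ :=
  Matrix.diagonal fun gi => if gi.1 ∈ I then 1 else 0

/-- The `g`-th row block of a stacked matrix. -/
def blk {K q p : ℕ} (X : Matrix (PairIdx K × Fin q) (Fin p) ℝ) (g : PairIdx K) :
    Matrix (Fin q) (Fin p) ℝ :=
  fun i j => X (g, i) j

attribute [local instance] Matrix.frobeniusSeminormedAddCommGroup

lemma frob_eq_norm {m n : Type*} [Fintype m] [Fintype n] (A : Matrix m n ℝ) :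
    frob A = ‖A‖ := by
  rw [Matrix.frobenius_norm_def, frob, Real.sqrt_eq_rpow]
  congr 1
  simp [Real.norm_eq_abs, Real.rpow_two, sq_abs]

lemma frob_nonneg {m n : Type*} [Fintype m] [Fintype n] (A : Matrix m n ℝ) :
    0 ≤ frob A := Real.sqrt_nonneg _

lemma frob_sq {m n : Type*} [Fintype m] [Fintype n] (A : Matrix m n ℝ) :
    frob A ^ 2 = ∑ i, ∑ j, (A i j) ^ 2 := Real.sq_sqrt (by positivity)

lemma frob_mul_le {l m n : Type*} [Fintype l] [Fintype m] [Fintype n]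
    (A : Matrix l m ℝ) (B : Matrix m n ℝ) : frob (A * B) ≤ frob A * frob B := by
  simp_rw [frob_eq_norm]; exact Matrix.frobenius_norm_mul A B

lemma frob_transpose {m n : Type*} [Fintype m] [Fintype n] (A : Matrix m n ℝ) :
    frob Aᵀ = frob A := by
  simp_rw [frob_eq_norm]; exact Matrix.frobenius_norm_transpose A

lemma piMat_transpose (K q : ℕ) (I : Finset (PairIdx K)) :
    (PiMat K q I)ᵀ = PiMat K q I := Matrix.diagonal_transpose _

lemma frob_piMat_mul_sq {K q r : ℕ} (I : Finset (PairIdx K))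
    (U : Matrix (PairIdx K × Fin q) (Fin r) ℝ) :
    frob (PiMat K q I * U) ^ 2 = ∑ g ∈ I, frob (blk U g) ^ 2 := by
  rw [frob_sq]
  rw [Fintype.sum_prod_type]
  have h : ∀ g : PairIdx K, (∑ i, ∑ j, ((PiMat K q I * U) (g, i) j) ^ 2)
      = if g ∈ I then frob (blk U g) ^ 2 else 0 := by
    intro g
    by_cases hg : g ∈ I <;>
      simp [PiMat, Matrix.diagonal_mul, hg, frob_sq, blk]
  simp_rw [h]
  rw [Finset.sum_ite_mem, Finset.univ_inter]

/-- `ρ ≤ Σ_{g∈I} ‖U^{(g)}‖_F²`; under block incoherence `ρ ≤ sμr/G`,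
and `sμr/G < 1` implies `ρ < 1`. -/
theorem stmt1 {K q p r : ℕ} (hK : 2 ≤ K) (hq : 1 ≤ q) (hp : 1 ≤ p) (hr : 1 ≤ r)
    (U : Matrix (PairIdx K × Fin q) (Fin r) ℝ) (hU : Uᵀ * U = 1)
    (I : Finset (PairIdx K)) (μ : ℝ) (hμ : 1 ≤ μ) :
    (opNormF (fun M : Matrix (PairIdx K × Fin q) (Fin p) ℝ =>
        PiMat K q I * (U * (Uᵀ * (PiMat K q I * M)))) ≤ ∑ g ∈ I, frob (blk U g) ^ 2) ∧
    ((∀ g : PairIdx K, frob (blk U g) ^ 2 ≤ μ * r / (Fintype.card (PairIdx K))) →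
      (opNormF (fun M : Matrix (PairIdx K × Fin q) (Fin p) ℝ =>
          PiMat K q I * (U * (Uᵀ * (PiMat K q I * M)))) ≤
        (I.card : ℝ) * μ * r / (Fintype.card (PairIdx K))) ∧
      ((I.card : ℝ) * μ * r / (Fintype.card (PairIdx K)) < 1 →
        opNormF (fun M : Matrix (PairIdx K × Fin q) (Fin p) ℝ =>
          PiMat K q I * (U * (Uᵀ * (PiMat K q I * M)))) < 1)) := by
  set c : ℝ := ∑ g ∈ I, frob (blk U g) ^ 2 with hc
  have hc0 : 0 ≤ c := Finset.sum_nonneg fun g _ => sq_nonneg _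
  -- the key bound
  have hbound : ∀ M : Matrix (PairIdx K × Fin q) (Fin p) ℝ,
      frob (PiMat K q I * (U * (Uᵀ * (PiMat K q I * M)))) ≤ c * frob M := by
    intro M
    have hrw : PiMat K q I * (U * (Uᵀ * (PiMat K q I * M)))
        = (PiMat K q I * U) * ((PiMat K q I * U)ᵀ * M) := by
      rw [Matrix.transpose_mul, piMat_transpose]
      simp [Matrix.mul_assoc]
    rw [hrw]
    calc frob ((PiMat K q I * U) * ((PiMat K q I * U)ᵀ * M))
        ≤ frob (PiMat K q I * U) * frob ((PiMat K q I * U)ᵀ * M) := frob_mul_le _ _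
      _ ≤ frob (PiMat K q I * U) * (frob ((PiMat K q I * U)ᵀ) * frob M) :=
          mul_le_mul_of_nonneg_left (frob_mul_le _ _) (frob_nonneg _)
      _ = frob (PiMat K q I * U) ^ 2 * frob M := by
          rw [frob_transpose]; ring
      _ = c * frob M := by rw [frob_piMat_mul_sq]
  have hle : ∀ d : ℝ, c ≤ d →
      opNormF (fun M : Matrix (PairIdx K × Fin q) (Fin p) ℝ =>
        PiMat K q I * (U * (Uᵀ * (PiMat K q I * M)))) ≤ d := by
    intro d hd
    exact csInf_le ⟨0, fun x hx => hx.1⟩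
      ⟨hc0.trans hd, fun M => (hbound M).trans
        (mul_le_mul_of_nonneg_right hd (frob_nonneg M))⟩
  refine ⟨hle c le_rfl, fun hinc => ?_⟩
  have hcle : c ≤ (I.card : ℝ) * μ * r / (Fintype.card (PairIdx K)) := by
    calc c ≤ ∑ _g ∈ I, μ * r / (Fintype.card (PairIdx K)) :=
          Finset.sum_le_sum fun g _ => hinc g
      _ = (I.card : ℝ) * (μ * r / (Fintype.card (PairIdx K))) := by
          rw [Finset.sum_const, nsmul_eq_mul]
      _ = (I.card : ℝ) * μ * r / (Fintype.card (PairIdx K)) := by ring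
  refine ⟨hle _ hcle, fun hlt => lt_of_le_of_lt (hle _ hcle) hlt⟩
end

section
/- Let P_A ∈ ℝ^{p×p} be an orthogonal projection matrix (P_Aᵀ = P_A = P_A²) of rank r. Let I ⊆ 𝒢 and suppose D₀ = L₀ + S₀ with L₀, S₀ ∈ ℝ^{Gq×p} satisfying L₀ P_A = L₀, rank(L₀) = r, Π_{I^c} L₀ = L₀, and Π_I S₀ = S₀. If a pair (L′, S′) of matrices in ℝ^{Gq×p} satisfies L′ + S′ = D₀, L′ P_A = L′, and Π_I S′ = S′, then rank(L′) = r and the row space of L′ equals the range of P_A; in particular, for any compact singular value decomposition L′ = U′ Σ′ V′ᵀ, one has V′ V′ᵀ = P_A. -/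
open Matrix

/-- Two matrices with the same action by `mulVec` are equal. -/
lemma eq_of_mulVec_eq {m n : Type*} [Fintype n] [DecidableEq n]
    {A B : Matrix m n ℝ} (h : ∀ x, A *ᵥ x = B *ᵥ x) : A = B := by
  ext i j
  have := congrFun (h (Pi.single j 1)) i
  simpa [Matrix.mulVec_single] using this

/-- The range of `(A*B).mulVecLin` is contained in that of `A.mulVecLin`. -/
lemma range_mul_le {m n k : Type*} [Fintype n] [Fintype k]
    (A : Matrix m n ℝ) (B : Matrix n k ℝ) :
    LinearMap.range (A * B).mulVecLin ≤ LinearMap.range A.mulVecLin := by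
  rw [Matrix.mulVecLin_mul]
  exact LinearMap.range_comp_le_range _ _

/-- Two symmetric idempotent matrices with the same range are equal. -/
lemma proj_eq_of_range_eq {n : Type*} [Fintype n] [DecidableEq n]
    {P Q : Matrix n n ℝ} (hPs : Pᵀ = P) (hPi : P * P = P)
    (hQs : Qᵀ = Q) (hQi : Q * Q = Q)
    (h : LinearMap.range P.mulVecLin = LinearMap.range Q.mulVecLin) : P = Q := by
  have key : ∀ (P Q : Matrix n n ℝ), P * P = P →
      LinearMap.range Q.mulVecLin ≤ LinearMap.range P.mulVecLin → P * Q = Q := by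
    intro P Q hPi hle
    apply eq_of_mulVec_eq
    intro x
    obtain ⟨y, hy⟩ := hle ⟨x, rfl⟩
    simp only [Matrix.mulVecLin_apply] at hy
    calc (P * Q) *ᵥ x = P *ᵥ (Q *ᵥ x) := by rw [← Matrix.mulVec_mulVec]
    _ = P *ᵥ (P *ᵥ y) := by rw [hy]
    _ = (P * P) *ᵥ y := by rw [Matrix.mulVec_mulVec]
    _ = P *ᵥ y := by rw [hPi]
    _ = Q *ᵥ x := hy
  have h1 : P * Q = Q := key P Q hPi h.ge
  have h2 : Q * P = P := key Q P hQi h.le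
  have h3 := congrArg Matrix.transpose h2
  rw [Matrix.transpose_mul, hPs, hQs] at h3
  rw [← h1, h3]

/-- every oracle-feasible pair `(L′,S′)` has `rank L′ = r`, row space of `L′`
equal to the range of `P_A`, and any compact SVD of `L′` satisfies `V′V′ᵀ = P_A`. -/
theorem stmt3 {K q p r : ℕ} (hK : 2 ≤ K) (hq : 1 ≤ q) (hp : 1 ≤ p) (hr : 1 ≤ r)
    (PA : Matrix (Fin p) (Fin p) ℝ) (hPAsymm : PAᵀ = PA) (hPAidem : PA * PA = PA)
    (hPArank : PA.rank = r)
    (I : Finset (PairIdx K))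
    (D0 L0 S0 : Matrix (PairIdx K × Fin q) (Fin p) ℝ)
    (hD0 : D0 = L0 + S0)
    (hL0A : L0 * PA = L0) (hL0rank : L0.rank = r)
    (hL0supp : (1 - PiMat K q I) * L0 = L0)
    (hS0supp : PiMat K q I * S0 = S0)
    (L' S' : Matrix (PairIdx K × Fin q) (Fin p) ℝ)
    (hfeas : L' + S' = D0) (hL'A : L' * PA = L') (hS'supp : PiMat K q I * S' = S') :
    L'.rank = r ∧
    LinearMap.range (L'ᵀ).mulVecLin = LinearMap.range PA.mulVecLin ∧
    (∀ (U' : Matrix (PairIdx K × Fin q) (Fin r) ℝ) (d : Fin r → ℝ)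
        (V' : Matrix (Fin p) (Fin r) ℝ),
      U'ᵀ * U' = 1 → V'ᵀ * V' = 1 → (∀ i, 0 < d i) →
      L' = U' * Matrix.diagonal d * V'ᵀ →
      V' * V'ᵀ = PA) := by
  set Pim : Matrix (PairIdx K × Fin q) (PairIdx K × Fin q) ℝ := PiMat K q I with hPim
  -- Π is idempotent
  have hPimIdem : Pim * Pim = Pim := by
    have hfun : (fun gi : PairIdx K × Fin q =>
        (if gi.1 ∈ I then (1:ℝ) else 0) * (if gi.1 ∈ I then 1 else 0)) =
        fun gi => if gi.1 ∈ I then 1 else 0 := by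
      funext gi; by_cases h : gi.1 ∈ I <;> simp [h]
    rw [hPim, PiMat, Matrix.diagonal_mul_diagonal, hfun]
  have hPimSymm : Pimᵀ = Pim := by rw [hPim, PiMat, Matrix.diagonal_transpose]
  -- annihilation of the sparse parts
  have hann : ∀ S : Matrix (PairIdx K × Fin q) (Fin p) ℝ,
      Pim * S = S → (1 - Pim) * S = 0 := by
    intro S hS
    rw [Matrix.sub_mul, Matrix.one_mul, hS, sub_self]
  -- key identity: (1 - Pim) L' = L0
  have key : (1 - Pim) * L' = L0 := by
    have hL' : L' = L0 + S0 - S' := by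
      rw [← hD0, ← hfeas]; abel
    rw [hL', Matrix.mul_sub, Matrix.mul_add, hL0supp, hann S0 hS0supp,
      hann S' hS'supp, add_zero, sub_zero]
  -- rank equality
  have hrank : L'.rank = r := by
    apply le_antisymm
    · calc L'.rank = (L' * PA).rank := by rw [hL'A]
      _ ≤ PA.rank := Matrix.rank_mul_le_right _ _
      _ = r := hPArank
    · calc r = L0.rank := hL0rank.symm
      _ = ((1 - Pim) * L').rank := by rw [key]
      _ ≤ L'.rank := Matrix.rank_mul_le_right _ _
  -- row space inclusions
  have hsub : ∀ M : Matrix (PairIdx K × Fin q) (Fin p) ℝ, M * PA = M →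
      LinearMap.range (Mᵀ).mulVecLin ≤ LinearMap.range PA.mulVecLin := by
    intro M hM
    have hMt : Mᵀ = PA * Mᵀ := by
      rw [← hPAsymm, ← Matrix.transpose_mul, hM]
    rw [hMt]
    exact range_mul_le _ _
  have hL0range : LinearMap.range (L0ᵀ).mulVecLin = LinearMap.range PA.mulVecLin := by
    apply Submodule.eq_of_le_of_finrank_eq (hsub L0 hL0A)
    show (L0ᵀ).rank = PA.rank
    rw [Matrix.rank_transpose, hL0rank, hPArank]
  have hrange : LinearMap.range (L'ᵀ).mulVecLin = LinearMap.range PA.mulVecLin := by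
    apply le_antisymm (hsub L' hL'A)
    rw [← hL0range, ← key]
    have : ((1 - Pim) * L')ᵀ = L'ᵀ * (1 - Pim) := by
      rw [Matrix.transpose_mul, Matrix.transpose_sub, Matrix.transpose_one, hPimSymm]
    rw [this]
    exact range_mul_le _ _
  refine ⟨hrank, hrange, ?_⟩
  -- SVD part
  intro U' d V' hU hV hd hL
  have hdne : ∀ i, d i ≠ 0 := fun i => (hd i).ne'
  -- range V' = range L'ᵀ
  have hVL : LinearMap.range V'.mulVecLin = LinearMap.range (L'ᵀ).mulVecLin := by
    apply le_antisymm
    · have hV' : V' = L'ᵀ * (U' * Matrix.diagonal fun i => (d i)⁻¹) := by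
        rw [hL]
        rw [Matrix.transpose_mul, Matrix.transpose_mul, Matrix.transpose_transpose,
          Matrix.diagonal_transpose]
        symm
        calc V' * (Matrix.diagonal d * U'ᵀ) * (U' * Matrix.diagonal fun i => (d i)⁻¹)
            = V' * (Matrix.diagonal d * ((U'ᵀ * U') * Matrix.diagonal fun i => (d i)⁻¹)) := by
              simp only [Matrix.mul_assoc]
          _ = V' * (Matrix.diagonal d * Matrix.diagonal fun i => (d i)⁻¹) := by
              rw [hU, Matrix.one_mul]
          _ = V' := by
              rw [Matrix.diagonal_mul_diagonal]
              have hone : (fun i => d i * (d i)⁻¹) = fun _ : Fin r => (1 : ℝ) := by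
                funext i; exact mul_inv_cancel₀ (hdne i)
              rw [hone, Matrix.diagonal_one, Matrix.mul_one]
      rw [hV']
      exact range_mul_le _ _
    · have hLt : L'ᵀ = V' * (Matrix.diagonal d * U'ᵀ) := by
        rw [hL, Matrix.transpose_mul, Matrix.transpose_mul, Matrix.transpose_transpose,
          Matrix.diagonal_transpose]
      rw [hLt]
      exact range_mul_le _ _
  -- range (V'V'ᵀ) = range V'
  have hVVt : LinearMap.range (V' * V'ᵀ).mulVecLin = LinearMap.range V'.mulVecLin := by
    apply le_antisymm (range_mul_le _ _)
    have : V' = V' * V'ᵀ * V' := by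
      rw [Matrix.mul_assoc, hV, Matrix.mul_one]
    nth_rewrite 1 [this]
    exact range_mul_le _ _
  -- conclude via uniqueness of orthogonal projections
  apply proj_eq_of_range_eq
  · rw [Matrix.transpose_mul, Matrix.transpose_transpose]
  · calc V' * V'ᵀ * (V' * V'ᵀ) = V' * (V'ᵀ * V') * V'ᵀ := by simp only [Matrix.mul_assoc]
    _ = V' * V'ᵀ := by rw [hV, Matrix.mul_one]
  · exact hPAsymm
  · exact hPAidem
  · rw [hVVt, hVL, hrange]
end

section
/- Let U′ ∈ ℝ^{N×r} have orthonormal columns, let Π ∈ ℝ^{N×N} be a 0/1 diagonal projection matrix with complement Π^c := I_N − Π, and suppose rank(Π^c U′) = r. Then ρ′ := ‖U′ᵀ Π U′‖_op < 1, the linear operator M ↦ M − Π U′ U′ᵀ Π M on ℝ^{N×p} is invertible, and the operator norm (with respect to the Frobenius norm) of its inverse is at most 1/(1 − ρ′). -/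
open Matrix

/-- Euclidean norm of a real vector. -/
noncomputable def vecNorm {n : Type*} [Fintype n] (x : n → ℝ) : ℝ :=
  Real.sqrt (∑ i, (x i) ^ 2)

/-- Spectral norm of a real matrix. -/
noncomputable def specNorm {m n : Type*} [Fintype m] [Fintype n] (A : Matrix m n ℝ) : ℝ :=
  sInf {c | 0 ≤ c ∧ ∀ x : n → ℝ, vecNorm (A.mulVec x) ≤ c * vecNorm x}

set_option maxHeartbeats 1000000

noncomputable def clm {m n : ℕ} (A : Matrix (Fin m) (Fin n) ℝ) :
    EuclideanSpace ℝ (Fin n) →L[ℝ] EuclideanSpace ℝ (Fin m) :=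
  LinearMap.toContinuousLinearMap (Matrix.toEuclideanLin A)

lemma clm_apply {m n : ℕ} (A : Matrix (Fin m) (Fin n) ℝ) (x : EuclideanSpace ℝ (Fin n)) :
    clm A x = A.mulVec x := rfl

lemma vecNorm_eq {n : ℕ} (x : EuclideanSpace ℝ (Fin n)) : vecNorm x = ‖x‖ := by
  rw [EuclideanSpace.norm_eq]
  simp only [vecNorm, Real.norm_eq_abs, sq_abs]

lemma specNorm_eq {m n : ℕ} (A : Matrix (Fin m) (Fin n) ℝ) : specNorm A = ‖clm A‖ := by
  have hset : {c | 0 ≤ c ∧ ∀ x : Fin n → ℝ, vecNorm (A.mulVec x) ≤ c * vecNorm x}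
      = {c : ℝ | 0 ≤ c ∧ ∀ x : EuclideanSpace ℝ (Fin n), ‖clm A x‖ ≤ c * ‖x‖} := by
    ext c
    simp only [Set.mem_setOf_eq]
    refine and_congr_right fun _ => ?_
    constructor
    · intro h x
      rw [← vecNorm_eq, ← vecNorm_eq, clm_apply]
      exact h x
    · intro h x
      rw [← clm_apply, vecNorm_eq, vecNorm_eq]
      exact h (WithLp.toLp 2 x)
  rw [specNorm, hset, ← ContinuousLinearMap.norm_def]

lemma clm_mul {m n k : ℕ} (A : Matrix (Fin m) (Fin n) ℝ) (B : Matrix (Fin n) (Fin k) ℝ) :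
    clm (A * B) = (clm A).comp (clm B) := by
  refine ContinuousLinearMap.ext fun x => ?_
  show WithLp.toLp 2 ((A * B).mulVec x) = WithLp.toLp 2 (A.mulVec (B.mulVec x))
  rw [Matrix.mulVec_mulVec]

lemma clm_add {m n : ℕ} (A B : Matrix (Fin m) (Fin n) ℝ) :
    clm (A + B) = clm A + clm B := by
  refine ContinuousLinearMap.ext fun x => ?_
  show WithLp.toLp 2 ((A + B).mulVec x) = WithLp.toLp 2 (A.mulVec x + B.mulVec x)
  rw [Matrix.add_mulVec]

lemma clm_one {n : ℕ} : clm (1 : Matrix (Fin n) (Fin n) ℝ) = ContinuousLinearMap.id ℝ _ := by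
  refine ContinuousLinearMap.ext fun x => ?_
  show WithLp.toLp 2 ((1 : Matrix (Fin n) (Fin n) ℝ).mulVec x) = x
  rw [Matrix.one_mulVec]

lemma clm_transpose {m n : ℕ} (A : Matrix (Fin m) (Fin n) ℝ) :
    clm Aᵀ = ContinuousLinearMap.adjoint (clm A) := by
  have h : Aᵀ = Aᴴ := by ext i j; simp [Matrix.conjTranspose_apply]
  rw [h]
  unfold clm
  rw [Matrix.toEuclideanLin_conjTranspose_eq_adjoint, LinearMap.adjoint_toContinuousLinearMap]

noncomputable def ecol {m n : ℕ} (M : Matrix (Fin m) (Fin n) ℝ) (j : Fin n) :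
    EuclideanSpace ℝ (Fin m) :=
  (WithLp.equiv 2 (Fin m → ℝ)).symm (fun i => M i j)

lemma ecol_apply {m n : ℕ} (M : Matrix (Fin m) (Fin n) ℝ) (j : Fin n) (i : Fin m) :
    ecol M j i = M i j := rfl

lemma norm_col_sq {m n : ℕ} (M : Matrix (Fin m) (Fin n) ℝ) (j : Fin n) :
    ‖ecol M j‖ ^ 2 = ∑ i, (M i j) ^ 2 := by
  rw [EuclideanSpace.norm_eq, Real.sq_sqrt (by positivity)]
  refine Finset.sum_congr rfl fun i _ => ?_
  rw [ecol_apply]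
  simp [Real.norm_eq_abs, sq_abs]

lemma col_sub {m n : ℕ} (A B : Matrix (Fin m) (Fin n) ℝ) (j : Fin n) :
    ecol (A - B) j = ecol A j - ecol B j := rfl

lemma clm_col {m n k : ℕ} (Q : Matrix (Fin m) (Fin n) ℝ) (M : Matrix (Fin n) (Fin k) ℝ)
    (j : Fin k) : clm Q (ecol M j) = ecol (Q * M) j := rfl


/-- if `rank(Pim^c U′) = r`, then `ρ′ := ‖U′ᵀ Pim U′‖_op < 1`, the operator
`M ↦ M − Pim U′U′ᵀ Pim M` is invertible, and its inverse has operator norm ≤ `1/(1−ρ′)`. -/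
theorem stmt6 {N r p : ℕ} (hN : 1 ≤ N) (hr : 1 ≤ r) (hp : 1 ≤ p) (hrN : r ≤ N)
    (U' : Matrix (Fin N) (Fin r) ℝ) (hU' : U'ᵀ * U' = 1)
    (d : Fin N → ℝ) (hd : ∀ i, d i = 0 ∨ d i = 1)
    (Pim : Matrix (Fin N) (Fin N) ℝ) (hPim : Pim = Matrix.diagonal d)
    (hrank : ((1 - Pim) * U').rank = r) :
    specNorm (U'ᵀ * Pim * U') < 1 ∧
    Function.Bijective (fun M : Matrix (Fin N) (Fin p) ℝ => M - Pim * (U' * (U'ᵀ * (Pim * M)))) ∧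
    ∀ M : Matrix (Fin N) (Fin p) ℝ,
      frob M ≤ (1 / (1 - specNorm (U'ᵀ * Pim * U'))) *
        frob (M - Pim * (U' * (U'ᵀ * (Pim * M)))) := by
  set B : Matrix (Fin N) (Fin r) ℝ := Pim * U' with hB
  set C : Matrix (Fin N) (Fin r) ℝ := (1 - Pim) * U' with hC
  have hPsymm : Pimᵀ = Pim := by rw [hPim]; exact Matrix.diagonal_transpose d
  have hPP : Pim * Pim = Pim := by
    rw [hPim, Matrix.diagonal_mul_diagonal]
    have hdd : (fun i => d i * d i) = d := funext fun i => by rcases hd i with h | h <;> simp [h]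
    rw [hdd]
  have hBB : Bᵀ * B = U'ᵀ * Pim * U' := by
    rw [hB, Matrix.transpose_mul, hPsymm]
    calc U'ᵀ * Pim * (Pim * U') = U'ᵀ * (Pim * Pim) * U' := by
          simp only [Matrix.mul_assoc]
      _ = U'ᵀ * Pim * U' := by rw [hPP]
  have h12 : (1 - Pim) * (1 - Pim) = 1 - Pim := by
    rw [Matrix.mul_sub, Matrix.sub_mul, Matrix.sub_mul, hPP]
    simp only [Matrix.one_mul, Matrix.mul_one]
    abel
  have hCC : Bᵀ * B + Cᵀ * C = 1 := by
    have h1c : (1 - Pim)ᵀ = 1 - Pim := by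
      rw [Matrix.transpose_sub, Matrix.transpose_one, hPsymm]
    rw [hB, hC, Matrix.transpose_mul, Matrix.transpose_mul, hPsymm, h1c]
    have e1 : U'ᵀ * Pim * (Pim * U') = U'ᵀ * (Pim * U') := by
      rw [Matrix.mul_assoc, ← Matrix.mul_assoc Pim, hPP]
    have e2 : U'ᵀ * (1 - Pim) * ((1 - Pim) * U') = U'ᵀ * ((1 - Pim) * U') := by
      rw [Matrix.mul_assoc, ← Matrix.mul_assoc (1 - Pim), h12]
    have e3 : Pim + (1 - Pim) = (1 : Matrix (Fin N) (Fin N) ℝ) := by abel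
    rw [e1, e2, ← Matrix.mul_add, ← Matrix.add_mul, e3, Matrix.one_mul, hU']
  -- injectivity of mulVec of C
  have hker : LinearMap.ker C.mulVecLin = ⊥ := by
    have h1 := LinearMap.finrank_range_add_finrank_ker C.mulVecLin
    rw [show Module.finrank ℝ ↥(LinearMap.range C.mulVecLin) = r from hrank] at h1
    simp only [Module.finrank_fin_fun] at h1
    have h2 : Module.finrank ℝ ↥(LinearMap.ker C.mulVecLin) = 0 := by omega
    exact Submodule.finrank_eq_zero.mp h2
  have hginj : Function.Injective (clm C) := by
    have h := LinearMap.ker_eq_bot.mp hker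
    intro x y hxy
    exact congrArg (WithLp.toLp 2) (h (show C.mulVecLin x.ofLp = C.mulVecLin y.ofLp from congrArg WithLp.ofLp hxy))
  obtain ⟨K, hK0, hKa⟩ := (Matrix.toEuclideanLin C).exists_antilipschitzWith
    (LinearMap.ker_eq_bot.mpr hginj)
  have hKb : ∀ x : EuclideanSpace ℝ (Fin r), ‖x‖ ≤ K * ‖clm C x‖ := by
    intro x
    have := hKa.le_mul_dist x 0
    simpa [dist_eq_norm, map_zero, clm] using this
  set f := clm B with hf
  set g := clm C with hg
  -- `‖f x‖² + ‖g x‖² = ‖x‖²`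
  have hsum : ∀ x : EuclideanSpace ℝ (Fin r), ‖f x‖ ^ 2 + ‖g x‖ ^ 2 = ‖x‖ ^ 2 := by
    intro x
    have h1 : ‖f x‖ ^ 2 = (inner ℝ x (clm (Bᵀ * B) x) : ℝ) := by
      rw [clm_mul, clm_transpose]
      simpa using ContinuousLinearMap.apply_norm_sq_eq_inner_adjoint_right f x
    have h2 : ‖g x‖ ^ 2 = (inner ℝ x (clm (Cᵀ * C) x) : ℝ) := by
      rw [clm_mul, clm_transpose]
      simpa using ContinuousLinearMap.apply_norm_sq_eq_inner_adjoint_right g x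
    have h3 : (inner ℝ x (clm (Bᵀ * B) x) : ℝ) + (inner ℝ x (clm (Cᵀ * C) x) : ℝ)
        = (inner ℝ x x : ℝ) := by
      rw [← inner_add_right]
      congr 1
      have h4 : clm (Bᵀ * B) x + clm (Cᵀ * C) x = clm (Bᵀ * B + Cᵀ * C) x := by
        rw [clm_add]; rfl
      rw [h4, hCC, clm_one]; rfl
    rw [h1, h2, h3, real_inner_self_eq_norm_sq]
  set ε : ℝ := (K : ℝ)⁻¹ with hε
  have hK0' : (0 : ℝ) < K := by exact_mod_cast hK0
  have hε0 : 0 < ε := inv_pos.mpr hK0'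
  have hgx : ∀ x : EuclideanSpace ℝ (Fin r), ε * ‖x‖ ≤ ‖g x‖ := by
    intro x
    have h := hKb x
    rw [hε, inv_mul_le_iff₀ hK0']
    linarith
  have hε1 : ε ≤ 1 := by
    set x0 : EuclideanSpace ℝ (Fin r) := EuclideanSpace.single ⟨0, hr⟩ (1 : ℝ) with hx0
    have hnx0 : ‖x0‖ = 1 := by rw [hx0, EuclideanSpace.norm_single]; norm_num
    have h1 : ‖g x0‖ ^ 2 ≤ ‖x0‖ ^ 2 := by
      have := hsum x0
      nlinarith [sq_nonneg ‖f x0‖]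
    have h2 : ‖g x0‖ ≤ ‖x0‖ := by
      have := Real.sqrt_le_sqrt h1
      rwa [Real.sqrt_sq (norm_nonneg _), Real.sqrt_sq (norm_nonneg _)] at this
    have h3 := hgx x0
    rw [hnx0] at h2 h3
    linarith
  have h1ε : (0 : ℝ) ≤ 1 - ε ^ 2 := by nlinarith
  have hfle : ∀ x : EuclideanSpace ℝ (Fin r), ‖f x‖ ≤ Real.sqrt (1 - ε ^ 2) * ‖x‖ := by
    intro x
    have h1 : (ε * ‖x‖) ^ 2 ≤ ‖g x‖ ^ 2 :=
      pow_le_pow_left₀ (mul_nonneg hε0.le (norm_nonneg _)) (hgx x) 2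
    have h2 : ‖f x‖ ^ 2 ≤ (1 - ε ^ 2) * ‖x‖ ^ 2 := by
      have := hsum x
      nlinarith
    calc ‖f x‖ = Real.sqrt (‖f x‖ ^ 2) := (Real.sqrt_sq (norm_nonneg _)).symm
      _ ≤ Real.sqrt ((1 - ε ^ 2) * ‖x‖ ^ 2) := Real.sqrt_le_sqrt h2
      _ = Real.sqrt (1 - ε ^ 2) * ‖x‖ := by
          rw [Real.sqrt_mul h1ε, Real.sqrt_sq (norm_nonneg _)]
  have hnf : ‖f‖ ≤ Real.sqrt (1 - ε ^ 2) :=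
    ContinuousLinearMap.opNorm_le_bound f (Real.sqrt_nonneg _) hfle
  have hρ : specNorm (U'ᵀ * Pim * U') = ‖f‖ * ‖f‖ := by
    rw [← hBB, specNorm_eq, clm_mul, clm_transpose]
    exact ContinuousLinearMap.norm_adjoint_comp_self f
  set ρ' : ℝ := specNorm (U'ᵀ * Pim * U') with hρ'
  have hρlt : ρ' < 1 := by
    have h1 : ρ' ≤ Real.sqrt (1 - ε ^ 2) * Real.sqrt (1 - ε ^ 2) :=
      hρ ▸ mul_le_mul hnf hnf (norm_nonneg _) (Real.sqrt_nonneg _)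
    rw [Real.mul_self_sqrt h1ε] at h1
    nlinarith
  have hρ0 : 0 ≤ ρ' := hρ ▸ mul_self_nonneg _
  have h1ρ : 0 < 1 - ρ' := by linarith
  -- norm of B * Bᵀ
  have hQn : ‖clm (B * Bᵀ)‖ = ρ' := by
    rw [clm_mul, clm_transpose, hρ]
    have hadj : ‖ContinuousLinearMap.adjoint (clm B)‖ = ‖clm B‖ :=
      LinearIsometryEquiv.norm_map ContinuousLinearMap.adjoint (clm B)
    have hcomp : (clm B).comp (ContinuousLinearMap.adjoint (clm B))
        = (ContinuousLinearMap.adjoint (ContinuousLinearMap.adjoint (clm B))).comp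
          (ContinuousLinearMap.adjoint (clm B)) := by
      rw [ContinuousLinearMap.adjoint_adjoint]
    rw [hcomp, ContinuousLinearMap.norm_adjoint_comp_self, hadj]
  have hvec : ∀ x : EuclideanSpace ℝ (Fin N),
      (1 - ρ') * ‖x‖ ≤ ‖x - clm (B * Bᵀ) x‖ := by
    intro x
    have h := (clm (B * Bᵀ)).le_opNorm x
    rw [hQn] at h
    have h2 := norm_sub_norm_le x (clm (B * Bᵀ) x)
    have h4 : (1 - ρ') * ‖x‖ = ‖x‖ - ρ' * ‖x‖ := by ring
    linarith
  -- matrix form of the operator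
  have hQmat : ∀ M : Matrix (Fin N) (Fin p) ℝ,
      Pim * (U' * (U'ᵀ * (Pim * M))) = (B * Bᵀ) * M := by
    intro M
    rw [hB, Matrix.transpose_mul, hPsymm]
    simp only [Matrix.mul_assoc]
  -- frobenius and columns
  have hfrob_sq : ∀ M : Matrix (Fin N) (Fin p) ℝ,
      frob M ^ 2 = ∑ j, ‖ecol M j‖ ^ 2 := by
    intro M
    rw [frob, Real.sq_sqrt (by positivity), Finset.sum_comm]
    exact Finset.sum_congr rfl fun j _ => (norm_col_sq M j).symm
  have hfrob0 : ∀ M : Matrix (Fin N) (Fin p) ℝ, 0 ≤ frob M := fun M => Real.sqrt_nonneg _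
  -- the key inequality
  have hM : ∀ M : Matrix (Fin N) (Fin p) ℝ,
      frob M ≤ (1 / (1 - ρ')) * frob (M - Pim * (U' * (U'ᵀ * (Pim * M)))) := by
    intro M
    rw [hQmat M]
    have h1 : ((1 - ρ') * frob M) ^ 2 ≤ frob (M - (B * Bᵀ) * M) ^ 2 := by
      rw [mul_pow, hfrob_sq, hfrob_sq, Finset.mul_sum]
      refine Finset.sum_le_sum fun j _ => ?_
      rw [col_sub, ← clm_col, ← mul_pow]
      exact pow_le_pow_left₀ (mul_nonneg h1ρ.le (norm_nonneg _)) (hvec _) 2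
    have h2 : (1 - ρ') * frob M ≤ frob (M - (B * Bᵀ) * M) := by
      have := Real.sqrt_le_sqrt h1
      rwa [Real.sqrt_sq (mul_nonneg h1ρ.le (hfrob0 M)), Real.sqrt_sq (hfrob0 _)] at this
    rw [one_div, inv_mul_eq_div, le_div_iff₀ h1ρ]
    linarith
  -- bijectivity
  have hfrob_zero : ∀ M : Matrix (Fin N) (Fin p) ℝ, frob M = 0 → M = 0 := by
    intro M h
    have h1 : ∑ i, ∑ j, (M i j) ^ 2 ≤ 0 := by
      by_contra hc
      push_neg at hc
      have := Real.sqrt_pos.mpr hc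
      rw [frob] at h
      linarith
    have h2 : ∑ i, ∑ j, (M i j) ^ 2 = 0 := le_antisymm h1 (by positivity)
    ext i j
    have h3 := (Finset.sum_eq_zero_iff_of_nonneg (fun i _ => by positivity)).mp h2 i
      (Finset.mem_univ i)
    have h4 := (Finset.sum_eq_zero_iff_of_nonneg (fun j _ => by positivity)).mp h3 j
      (Finset.mem_univ j)
    simpa using pow_eq_zero_iff (n := 2) (by norm_num) |>.mp h4
  let Tl : Matrix (Fin N) (Fin p) ℝ →ₗ[ℝ] Matrix (Fin N) (Fin p) ℝ :=
    { toFun := fun M => M - Pim * (U' * (U'ᵀ * (Pim * M)))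
      map_add' := fun M₁ M₂ => by simp only [Matrix.mul_add]; abel
      map_smul' := fun c M => by
        simp only [Matrix.mul_smul, smul_sub, RingHom.id_apply] }
  have hTinj : Function.Injective Tl := by
    refine (injective_iff_map_eq_zero Tl).mpr fun M hM0 => ?_
    have h1 := hM M
    have h2 : M - Pim * (U' * (U'ᵀ * (Pim * M))) = 0 := hM0
    rw [h2] at h1
    have h3 : frob (0 : Matrix (Fin N) (Fin p) ℝ) = 0 := by simp [frob]
    rw [h3, mul_zero] at h1
    exact hfrob_zero M (le_antisymm h1 (hfrob0 M))
  have hTbij : Function.Bijective Tl :=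
    ⟨hTinj, (LinearMap.injective_iff_surjective (f := Tl)).mp hTinj⟩
  exact ⟨hρlt, hTbij, hM⟩
end

section
/- Let K ≥ 2 and let C ⊆ [K] be nonempty with complement C^c := [K] ∖ C. For each unordered pair of distinct indices j ≠ k in [K], let ŝ_{j,k} = ŝ_{k,j} ≥ 0 be a real number. Suppose there exist reals ε ≥ 0, β > 0, τ ≥ 0, and α such that: (i) ŝ_{j,k} ≤ ε for all distinct j, k ∈ C; (ii) ŝ_{j,k} ≥ β − ε for all j ∈ C and k ∈ C^c; (iii) ε ≤ τ < β − ε; and (iv) (|C^c| − 1)/(K − 1) < α ≤ (|C| − 1)/(K − 1). Define Ĉ_α := {k ∈ [K] : (1/(K−1)) Σ_{j≠k} 1{ŝ_{j,k} ≤ τ} ≥ α}. Then Ĉ_α = C. -/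
/-- the majority-voting threshold rule exactly recovers the benign set `C`. -/
theorem stmt14 {K : ℕ} (hK : 2 ≤ K)
    (C : Finset (Fin K)) (hC : C.Nonempty)
    (s : Fin K → Fin K → ℝ) (hsymm : ∀ j k, s j k = s k j) (hnn : ∀ j k, 0 ≤ s j k)
    (ε β τ α : ℝ) (hε : 0 ≤ ε) (hβ : 0 < β) (hτnn : 0 ≤ τ)
    (hbenign : ∀ j ∈ C, ∀ k ∈ C, j ≠ k → s j k ≤ ε)
    (hmixed : ∀ j ∈ C, ∀ k ∉ C, β - ε ≤ s j k)
    (hτ1 : ε ≤ τ) (hτ2 : τ < β - ε)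
    (hα1 : ((Cᶜ.card : ℝ) - 1) / ((K : ℝ) - 1) < α)
    (hα2 : α ≤ ((C.card : ℝ) - 1) / ((K : ℝ) - 1)) :
    {k : Fin K |
        α ≤ ((K : ℝ) - 1)⁻¹ * ∑ j ∈ ({k}ᶜ : Finset (Fin K)), (if s j k ≤ τ then (1 : ℝ) else 0)} =
      (C : Set (Fin K)) := by
  have hK1 : (0:ℝ) < (K:ℝ) - 1 := by
    have : (2:ℝ) ≤ (K:ℝ) := by exact_mod_cast hK
    linarith
  ext k
  simp only [Set.mem_setOf_eq, Finset.mem_coe, Finset.sum_boole]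
  constructor
  · intro hk
    by_contra hkC
    have hsub : ({k}ᶜ : Finset (Fin K)).filter (fun j => s j k ≤ τ) ⊆ Cᶜ.erase k := by
      intro j hj
      simp only [Finset.mem_filter, Finset.mem_compl, Finset.mem_singleton,
        Finset.mem_erase] at hj ⊢
      obtain ⟨hjk, hsjk⟩ := hj
      refine ⟨hjk, fun hjC => ?_⟩
      have := hmixed j hjC k hkC
      linarith
    have hkcc : k ∈ Cᶜ := Finset.mem_compl.mpr hkC
    have hcard : (({k}ᶜ : Finset (Fin K)).filter (fun j => s j k ≤ τ)).card
        ≤ Cᶜ.card - 1 := by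
      calc _ ≤ (Cᶜ.erase k).card := Finset.card_le_card hsub
        _ = Cᶜ.card - 1 := Finset.card_erase_of_mem hkcc
    have h1 : 1 ≤ Cᶜ.card := Finset.card_pos.mpr ⟨k, hkcc⟩
    have hcardR : ((({k}ᶜ : Finset (Fin K)).filter (fun j => s j k ≤ τ)).card : ℝ)
        ≤ (Cᶜ.card : ℝ) - 1 := by
      have := Nat.cast_le (α := ℝ) |>.mpr hcard
      rwa [Nat.cast_sub h1, Nat.cast_one] at this
    have h2 : ((Cᶜ.card : ℝ) - 1) < α * ((K:ℝ) - 1) := by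
      rw [div_lt_iff₀ hK1] at hα1; exact hα1
    rw [inv_mul_eq_div, le_div_iff₀ hK1] at hk
    linarith
  · intro hkC
    have hsub : C.erase k ⊆ ({k}ᶜ : Finset (Fin K)).filter (fun j => s j k ≤ τ) := by
      intro j hj
      simp only [Finset.mem_erase] at hj
      simp only [Finset.mem_filter, Finset.mem_compl, Finset.mem_singleton]
      exact ⟨hj.1, le_trans (hbenign j hj.2 k hkC hj.1) hτ1⟩
    have hcard : C.card - 1 ≤ (({k}ᶜ : Finset (Fin K)).filter (fun j => s j k ≤ τ)).card := by
      calc C.card - 1 = (C.erase k).card := (Finset.card_erase_of_mem hkC).symm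
        _ ≤ _ := Finset.card_le_card hsub
    have h1 : 1 ≤ C.card := Finset.card_pos.mpr ⟨k, hkC⟩
    have hcardR : (C.card : ℝ) - 1
        ≤ ((({k}ᶜ : Finset (Fin K)).filter (fun j => s j k ≤ τ)).card : ℝ) := by
      have := Nat.cast_le (α := ℝ) |>.mpr hcard
      rwa [Nat.cast_sub h1, Nat.cast_one] at this
    have h2 : α * ((K:ℝ) - 1) ≤ (C.card : ℝ) - 1 := (le_div_iff₀ hK1).mp hα2
    rw [inv_mul_eq_div, le_div_iff₀ hK1]
    linarith
end

section
/- Let K ≥ 2 and let C ⊆ [K] with |C| = ηK for some η > 1/2 (ηK an integer). For each unordered pair of distinct indices j ≠ k in [K], let S^{(j,k)} = S^{(k,j)} ∈ ℝ^{q×p}. Suppose: (i) S^{(j,k)} = 0 whenever both j, k ∈ C; and (ii) S^{(j,k)} ≠ 0 whenever exactly one of j, k lies in C (mixed-pair separation). Then C = {k ∈ [K] : (1/(K−1)) Σ_{j≠k} 1{S^{(j,k)} = 0} ≥ (Kη − 1)/(K − 1)}, i.e., the population majority zero-block rule exactly identifies the collaborative set C. -/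
/-- the population majority zero-block rule exactly identifies
the collaborative set `C`. -/
theorem stmt15 {K q p : ℕ} (hK : 2 ≤ K) (hq : 1 ≤ q) (hp : 1 ≤ p)
    (C : Finset (Fin K)) (η : ℝ) (hη : 1 / 2 < η) (hCcard : (C.card : ℝ) = η * K)
    (S : Fin K → Fin K → Matrix (Fin q) (Fin p) ℝ)
    (hsymm : ∀ j k, S j k = S k j)
    (hbenign : ∀ j ∈ C, ∀ k ∈ C, j ≠ k → S j k = 0)
    (hmixed : ∀ j ∈ C, ∀ k ∉ C, S j k ≠ 0) :
    (C : Set (Fin K)) =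
      {k : Fin K |
        ((K : ℝ) * η - 1) / ((K : ℝ) - 1) ≤
          ((K : ℝ) - 1)⁻¹ *
            ∑ j ∈ ({k}ᶜ : Finset (Fin K)), (if S j k = 0 then (1 : ℝ) else 0)} := by
  have hK2 : (2:ℝ) ≤ (K:ℝ) := by exact_mod_cast hK
  have hKpos : (0:ℝ) < (K:ℝ) - 1 := by linarith
  ext k
  simp only [Set.mem_setOf_eq, Finset.mem_coe]
  have hsum : ∑ j ∈ ({k}ᶜ : Finset (Fin K)), (if S j k = 0 then (1 : ℝ) else 0)
      = ((({k}ᶜ : Finset (Fin K)).filter (fun j => S j k = 0)).card : ℝ) := by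
    rw [Finset.sum_boole]
  rw [hsum, inv_mul_eq_div, div_le_div_iff_of_pos_right hKpos]
  constructor
  · intro hkC
    have hsub : C.erase k ⊆ ({k}ᶜ : Finset (Fin K)).filter (fun j => S j k = 0) := by
      intro j hj
      rw [Finset.mem_erase] at hj
      simp only [Finset.mem_filter, Finset.mem_compl, Finset.mem_singleton]
      exact ⟨hj.1, hbenign j hj.2 k hkC hj.1⟩
    have hcard := Finset.card_le_card hsub
    have h1 : 1 ≤ C.card := Finset.card_pos.mpr ⟨k, hkC⟩
    have herase : ((C.erase k).card : ℝ) = (C.card : ℝ) - 1 := by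
      rw [Finset.card_erase_of_mem hkC]
      push_cast [Nat.cast_sub h1]
      ring
    have : ((C.erase k).card : ℝ) ≤
        ((({k}ᶜ : Finset (Fin K)).filter (fun j => S j k = 0)).card : ℝ) := by
      exact_mod_cast hcard
    rw [herase, hCcard] at this
    linarith
  · intro hge
    by_contra hkC
    have hsub : ({k}ᶜ : Finset (Fin K)).filter (fun j => S j k = 0) ⊆ Cᶜ.erase k := by
      intro j hj
      simp only [Finset.mem_filter, Finset.mem_compl, Finset.mem_singleton] at hj
      rw [Finset.mem_erase, Finset.mem_compl]
      refine ⟨hj.1, fun hjC => ?_⟩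
      exact hmixed j hjC k hkC hj.2
    have hcard := Finset.card_le_card hsub
    have hkc : k ∈ Cᶜ := Finset.mem_compl.mpr hkC
    have h1 : 1 ≤ Cᶜ.card := Finset.card_pos.mpr ⟨k, hkc⟩
    have hCc : (Cᶜ.card : ℝ) = (K : ℝ) - (C.card : ℝ) := by
      rw [Finset.card_compl]
      have hCle : C.card ≤ K := by simpa using Finset.card_le_univ C
      rw [Fintype.card_fin, Nat.cast_sub hCle]
    have herase : ((Cᶜ.erase k).card : ℝ) = (Cᶜ.card : ℝ) - 1 := by
      rw [Finset.card_erase_of_mem hkc]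
      push_cast [Nat.cast_sub h1]
      ring
    have hle : ((({k}ᶜ : Finset (Fin K)).filter (fun j => S j k = 0)).card : ℝ) ≤
        ((Cᶜ.erase k).card : ℝ) := by exact_mod_cast hcard
    rw [herase, hCc, hCcard] at hle
    nlinarith
end

section
/- Let (Ω, ℱ, ℙ) be a probability space, let C be a finite index set with m := |C| ≥ 1, and let {Ξ_j}_{j∈C} be independent random matrices with values in ℝ^{q×p}, each Bochner integrable with mean zero and with E‖Ξ_j‖_F² < ∞. Let P ∈ ℝ^{p×p} be an orthogonal projection matrix (Pᵀ = P = P²) and P⊥ := I_p − P. Fix k ∈ C and define Ξ̄ := (1/m) Σ_{j∈C} Ξ_j. Then E‖Ξ_k P + Ξ̄ P⊥‖_F² = E‖Ξ_k P‖_F² + (1/m²) Σ_{j∈C} E‖Ξ_j P⊥‖_F². Consequently, writing ℰ^{(k)} := E‖Ξ_k‖_F², ℰ_⊥^{(k)} := E‖Ξ_k P⊥‖_F², θ_k := ℰ_⊥^{(k)}/ℰ^{(k)}, and φ_k := (ℰ_⊥^{(k)} − (1/m²) Σ_{j∈C} E‖Ξ_j P⊥‖_F²)/ℰ_⊥^{(k)}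 (assuming ℰ^{(k)} > 0 and ℰ_⊥^{(k)} > 0), one has E‖Ξ_k P + Ξ̄ P⊥‖_F² = (1 − φ_k θ_k) · ℰ^{(k)}. -/
open Matrix MeasureTheory ProbabilityTheory

/-- Squared Frobenius norm of a real matrix. -/
def frobSq {m n : Type*} [Fintype m] [Fintype n] (A : Matrix m n ℝ) : ℝ :=
  ∑ i, ∑ j, (A i j) ^ 2

/-- The product measurable-space structure on real matrices. -/
instance matMeasurableSpace {q p : ℕ} : MeasurableSpace (Matrix (Fin q) (Fin p) ℝ) :=
  inferInstanceAs (MeasurableSpace (Fin q → Fin p → ℝ))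

def Xe {q p : ℕ} {Ω ι : Type*} (Ξ : ι → Ω → Matrix (Fin q) (Fin p) ℝ)
    (Q : Matrix (Fin p) (Fin p) ℝ) (j : ι) (i : Fin q) (l : Fin p) (ω : Ω) : ℝ :=
  ∑ s, Ξ j ω i s * Q s l

lemma frobSq_nonneg {m n : Type*} [Fintype m] [Fintype n] (A : Matrix m n ℝ) :
    0 ≤ frobSq A :=
  Finset.sum_nonneg fun _ _ => Finset.sum_nonneg fun _ _ => sq_nonneg _

set_option linter.unusedSectionVars false
section Core
variable {q p : ℕ}
    {Ω : Type*} [MeasurableSpace Ω] {μ : Measure Ω} [IsProbabilityMeasure μ]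
    {ι : Type*} [Fintype ι]
    {Ξ : ι → Ω → Matrix (Fin q) (Fin p) ℝ}
    (Q : Matrix (Fin p) (Fin p) ℝ)

lemma hQmeas (i : Fin q) (l : Fin p) :
    Measurable (fun M : Matrix (Fin q) (Fin p) ℝ => ∑ s, M i s * Q s l) :=
  Finset.measurable_sum _ fun s _ =>
    ((measurable_pi_apply s).comp (measurable_pi_apply i)).mul_const _

lemma hXmeas (hmeas : ∀ j, Measurable (Ξ j)) (j : ι) (i : Fin q) (l : Fin p) :
    Measurable (Xe Ξ Q j i l) :=
  (hQmeas Q i l).comp (hmeas j)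

lemma hXint (hint : ∀ j i l, Integrable (fun ω => Ξ j ω i l) μ) (j : ι) (i : Fin q) (l : Fin p) :
    Integrable (Xe Ξ Q j i l) μ :=
  integrable_finset_sum _ fun s _ => (hint j i s).mul_const _

lemma hXmean (hint : ∀ j i l, Integrable (fun ω => Ξ j ω i l) μ)
    (hmean : ∀ j i l, (∫ ω, Ξ j ω i l ∂μ) = 0) (j : ι) (i : Fin q) (l : Fin p) :
    ∫ ω, Xe Ξ Q j i l ω ∂μ = 0 := by
  unfold Xe
  rw [integral_finset_sum _ fun s _ => (hint j i s).mul_const _]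
  simp [integral_mul_const, hmean]

lemma hXbound (j : ι) (i : Fin q) (l : Fin p) (ω : Ω) :
    (Xe Ξ Q j i l ω) ^ 2 ≤ (∑ s, Q s l ^ 2) * frobSq (Ξ j ω) := by
  have h1 := Finset.sum_mul_sq_le_sq_mul_sq Finset.univ (fun s => Ξ j ω i s) (fun s => Q s l)
  have h2 : (∑ s, Ξ j ω i s ^ 2) ≤ frobSq (Ξ j ω) := by
    unfold frobSq
    exact Finset.single_le_sum (f := fun i' => ∑ s, Ξ j ω i' s ^ 2)
      (fun i' _ => Finset.sum_nonneg fun _ _ => sq_nonneg _) (Finset.mem_univ i)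
  calc (Xe Ξ Q j i l ω) ^ 2 ≤ (∑ s, Ξ j ω i s ^ 2) * (∑ s, Q s l ^ 2) := h1
    _ ≤ frobSq (Ξ j ω) * (∑ s, Q s l ^ 2) :=
      mul_le_mul_of_nonneg_right h2 (Finset.sum_nonneg fun _ _ => sq_nonneg _)
    _ = (∑ s, Q s l ^ 2) * frobSq (Ξ j ω) := mul_comm _ _

lemma hXsqint (hmeas : ∀ j, Measurable (Ξ j)) (hsq : ∀ j, Integrable (fun ω => frobSq (Ξ j ω)) μ)
    (j : ι) (i : Fin q) (l : Fin p) :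
    Integrable (fun ω => (Xe Ξ Q j i l ω) ^ 2) μ := by
  refine Integrable.mono ((hsq j).const_mul (∑ s, Q s l ^ 2))
    ((hXmeas Q hmeas j i l).pow_const 2).aestronglyMeasurable
    (Filter.Eventually.of_forall fun ω => ?_)
  rw [Real.norm_eq_abs, Real.norm_eq_abs, abs_of_nonneg (sq_nonneg _)]
  exact (hXbound Q j i l ω).trans (le_abs_self _)

lemma hprodint (hmeas : ∀ j, Measurable (Ξ j))
    (hindep : iIndepFun (m := fun _ : ι => matMeasurableSpace) Ξ μ)
    (hint : ∀ j i l, Integrable (fun ω => Ξ j ω i l) μ)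
    (hsq : ∀ j, Integrable (fun ω => frobSq (Ξ j ω)) μ)
    (j j' : ι) (i : Fin q) (l : Fin p) :
    Integrable (fun ω => Xe Ξ Q j i l ω * Xe Ξ Q j' i l ω) μ := by
  by_cases h : j = j'
  · subst h
    simpa [pow_two] using hXsqint Q hmeas hsq j i l
  · have hi : IndepFun (Xe Ξ Q j i l) (Xe Ξ Q j' i l) μ :=
      (hindep.indepFun h).comp (hQmeas Q i l) (hQmeas Q i l)
    exact hi.integrable_mul (hXint Q hint j i l) (hXint Q hint j' i l)

lemma hprodzero (hmeas : ∀ j, Measurable (Ξ j))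
    (hindep : iIndepFun (m := fun _ : ι => matMeasurableSpace) Ξ μ)
    (hint : ∀ j i l, Integrable (fun ω => Ξ j ω i l) μ)
    (hmean : ∀ j i l, (∫ ω, Ξ j ω i l ∂μ) = 0)
    {j j' : ι} (h : j ≠ j') (i : Fin q) (l : Fin p) :
    ∫ ω, Xe Ξ Q j i l ω * Xe Ξ Q j' i l ω ∂μ = 0 := by
  have hi : IndepFun (Xe Ξ Q j i l) (Xe Ξ Q j' i l) μ :=
    (hindep.indepFun h).comp (hQmeas Q i l) (hQmeas Q i l)
  have h2 := hi.integral_mul_eq_mul_integral (hXint Q hint j i l).aestronglyMeasurable (hXint Q hint j' i l).aestronglyMeasurable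
  show integral μ (Xe Ξ Q j i l * Xe Ξ Q j' i l) = 0
  rw [h2, hXmean Q hint hmean, zero_mul]

lemma core (hmeas : ∀ j, Measurable (Ξ j))
    (hindep : iIndepFun (m := fun _ : ι => matMeasurableSpace) Ξ μ)
    (hint : ∀ j i l, Integrable (fun ω => Ξ j ω i l) μ)
    (hmean : ∀ j i l, (∫ ω, Ξ j ω i l ∂μ) = 0)
    (hsq : ∀ j, Integrable (fun ω => frobSq (Ξ j ω)) μ) :
    ∫ ω, frobSq ((∑ j, Ξ j ω) * Q) ∂μ = ∑ j, ∫ ω, frobSq (Ξ j ω * Q) ∂μ := by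
  have hrw : ∀ ω, frobSq ((∑ j, Ξ j ω) * Q)
      = ∑ i, ∑ l, ∑ j, ∑ j', Xe Ξ Q j i l ω * Xe Ξ Q j' i l ω := by
    intro ω
    have hentry : ∀ (i : Fin q) (l : Fin p),
        ((∑ j, Ξ j ω) * Q) i l = ∑ j, Xe Ξ Q j i l ω := by
      intro i l
      rw [Matrix.sum_mul, Matrix.sum_apply]
      refine Finset.sum_congr rfl fun j _ => ?_
      rw [Matrix.mul_apply]; rfl
    unfold frobSq
    refine Finset.sum_congr rfl fun i _ => Finset.sum_congr rfl fun l _ => ?_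
    rw [hentry, pow_two, Finset.sum_mul_sum]
  simp_rw [hrw]
  rw [integral_finset_sum _ (fun i _ => integrable_finset_sum _ fun l _ =>
    integrable_finset_sum _ fun j _ => integrable_finset_sum _ fun j' _ =>
      hprodint Q hmeas hindep hint hsq j j' i l)]
  have step2 : ∀ i : Fin q,
      (∫ ω, ∑ l, ∑ j, ∑ j', Xe Ξ Q j i l ω * Xe Ξ Q j' i l ω ∂μ)
        = ∑ l, ∑ j, ∫ ω, (Xe Ξ Q j i l ω) ^ 2 ∂μ := by
    intro i
    rw [integral_finset_sum _ (fun l _ => integrable_finset_sum _ fun j _ =>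
      integrable_finset_sum _ fun j' _ => hprodint Q hmeas hindep hint hsq j j' i l)]
    refine Finset.sum_congr rfl fun l _ => ?_
    rw [integral_finset_sum _ (fun j _ => integrable_finset_sum _ fun j' _ =>
      hprodint Q hmeas hindep hint hsq j j' i l)]
    refine Finset.sum_congr rfl fun j _ => ?_
    rw [integral_finset_sum _ (fun j' _ => hprodint Q hmeas hindep hint hsq j j' i l)]
    rw [Finset.sum_eq_single_of_mem j (Finset.mem_univ j)
      (fun j' _ hne => hprodzero Q hmeas hindep hint hmean (Ne.symm hne) i l)]
    simp [pow_two]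
  simp_rw [step2]
  have step3 : ∀ j : ι, ∫ ω, frobSq (Ξ j ω * Q) ∂μ = ∑ i, ∑ l, ∫ ω, (Xe Ξ Q j i l ω) ^ 2 ∂μ := by
    intro j
    have h1 : (fun ω => frobSq (Ξ j ω * Q)) = fun ω => ∑ i, ∑ l, (Xe Ξ Q j i l ω) ^ 2 := by
      funext ω
      unfold frobSq Xe
      exact Finset.sum_congr rfl fun i _ => Finset.sum_congr rfl fun l _ => by
        rw [Matrix.mul_apply]
    rw [h1, integral_finset_sum _ (fun i _ => integrable_finset_sum _ fun l _ =>
      hXsqint Q hmeas hsq j i l)]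
    exact Finset.sum_congr rfl fun i _ =>
      integral_finset_sum _ fun l _ => hXsqint Q hmeas hsq j i l
  simp_rw [step3]
  have h1 : ∀ i : Fin q, (∑ l, ∑ j, ∫ ω, (Xe Ξ Q j i l ω) ^ 2 ∂μ)
      = ∑ j, ∑ l, ∫ ω, (Xe Ξ Q j i l ω) ^ 2 ∂μ := fun i => Finset.sum_comm
  simp_rw [h1]
  exact Finset.sum_comm

lemma frobSq_mul_eq (j : ι) :
    (fun ω => frobSq (Ξ j ω * Q)) = fun ω => ∑ i, ∑ l, (Xe Ξ Q j i l ω) ^ 2 := by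
  funext ω
  unfold frobSq Xe
  exact Finset.sum_congr rfl fun i _ => Finset.sum_congr rfl fun l _ => by
    rw [Matrix.mul_apply]

lemma frobSq_mul_integrable (hmeas : ∀ j, Measurable (Ξ j))
    (hsq : ∀ j, Integrable (fun ω => frobSq (Ξ j ω)) μ) (j : ι) :
    Integrable (fun ω => frobSq (Ξ j ω * Q)) μ := by
  rw [frobSq_mul_eq Q j]
  exact integrable_finset_sum _ fun i _ => integrable_finset_sum _ fun l _ =>
    hXsqint Q hmeas hsq j i l

lemma sumQ_integrable (hmeas : ∀ j, Measurable (Ξ j))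
    (hindep : iIndepFun (m := fun _ : ι => matMeasurableSpace) Ξ μ)
    (hint : ∀ j i l, Integrable (fun ω => Ξ j ω i l) μ)
    (hsq : ∀ j, Integrable (fun ω => frobSq (Ξ j ω)) μ) :
    Integrable (fun ω => frobSq ((∑ j, Ξ j ω) * Q)) μ := by
  have hrw : (fun ω => frobSq ((∑ j, Ξ j ω) * Q))
      = fun ω => ∑ i, ∑ l, ∑ j, ∑ j', Xe Ξ Q j i l ω * Xe Ξ Q j' i l ω := by
    funext ω
    have hentry : ∀ (i : Fin q) (l : Fin p),
        ((∑ j, Ξ j ω) * Q) i l = ∑ j, Xe Ξ Q j i l ω := by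
      intro i l
      rw [Matrix.sum_mul, Matrix.sum_apply]
      refine Finset.sum_congr rfl fun j _ => ?_
      rw [Matrix.mul_apply]; rfl
    unfold frobSq
    refine Finset.sum_congr rfl fun i _ => Finset.sum_congr rfl fun l _ => ?_
    rw [hentry, pow_two, Finset.sum_mul_sum]
  rw [hrw]
  exact integrable_finset_sum _ fun i _ => integrable_finset_sum _ fun l _ =>
    integrable_finset_sum _ fun j _ => integrable_finset_sum _ fun j' _ =>
      hprodint Q hmeas hindep hint hsq j j' i l

end Core

lemma frobSq_smul' {m n : Type*} [Fintype m] [Fintype n] (c : ℝ) (A : Matrix m n ℝ) :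
    frobSq (c • A) = c ^ 2 * frobSq A := by
  simp [frobSq, Matrix.smul_apply, smul_eq_mul, mul_pow, Finset.mul_sum]

lemma frobSq_add_orth {q p : ℕ} {P : Matrix (Fin p) (Fin p) ℝ}
    (hPsymm : Pᵀ = P) (hPidem : P * P = P)
    (A B : Matrix (Fin q) (Fin p) ℝ) :
    frobSq (A * P + B * (1 - P)) = frobSq (A * P) + frobSq (B * (1 - P)) := by
  set C : Matrix (Fin q) (Fin p) ℝ := A * P with hC
  set D : Matrix (Fin q) (Fin p) ℝ := B * (1 - P) with hD
  have hPQ : P * (1 - P) = 0 := by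
    rw [Matrix.mul_sub, Matrix.mul_one, hPidem, sub_self]
  have h0 : C * Dᵀ = 0 := by
    rw [hC, hD, Matrix.transpose_mul, Matrix.transpose_sub, Matrix.transpose_one, hPsymm,
      Matrix.mul_assoc, ← Matrix.mul_assoc P, hPQ, Matrix.zero_mul, Matrix.mul_zero]
  have key : ∀ i : Fin q, ∑ l, C i l * D i l = 0 := by
    intro i
    have := congrFun (congrFun h0 i) i
    simpa [Matrix.mul_apply, Matrix.transpose_apply] using this
  simp only [frobSq, Matrix.add_apply]
  have expand : ∀ (i : Fin q) (l : Fin p),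
      (C i l + D i l) ^ 2 = C i l ^ 2 + D i l ^ 2 + 2 * (C i l * D i l) := by intros; ring
  simp_rw [expand, Finset.sum_add_distrib, ← Finset.mul_sum]
  simp [key]


/-- oracle MSE decomposition of the CLAIR refined error
`Ξ_k P + Ξ̄ P⊥`, and the consequent `(1 − φ_k θ_k)·ℰ^{(k)}` form. -/
theorem stmt16 {q p : ℕ} (hq : 1 ≤ q) (hp : 1 ≤ p)
    {Ω : Type*} [MeasurableSpace Ω] (μ : Measure Ω) [IsProbabilityMeasure μ]
    {ι : Type*} [Fintype ι] [Nonempty ι]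
    (Ξ : ι → Ω → Matrix (Fin q) (Fin p) ℝ)
    (hmeas : ∀ j, Measurable (Ξ j))
    (hindep : iIndepFun (m := fun _ : ι => matMeasurableSpace) Ξ μ)
    (hint : ∀ j i l, Integrable (fun ω => Ξ j ω i l) μ)
    (hmean : ∀ j i l, (∫ ω, Ξ j ω i l ∂μ) = 0)
    (hsq : ∀ j, Integrable (fun ω => frobSq (Ξ j ω)) μ)
    (P : Matrix (Fin p) (Fin p) ℝ) (hPsymm : Pᵀ = P) (hPidem : P * P = P)
    (k : ι) :
    (∫ ω, frobSq (Ξ k ω * P +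
        ((Fintype.card ι : ℝ)⁻¹ • ∑ j, Ξ j ω) * ((1 : Matrix (Fin p) (Fin p) ℝ) - P)) ∂μ) =
      (∫ ω, frobSq (Ξ k ω * P) ∂μ) +
        (Fintype.card ι : ℝ)⁻¹ ^ 2 *
          ∑ j, ∫ ω, frobSq (Ξ j ω * ((1 : Matrix (Fin p) (Fin p) ℝ) - P)) ∂μ ∧
    ((0 < ∫ ω, frobSq (Ξ k ω) ∂μ) →
      (0 < ∫ ω, frobSq (Ξ k ω * ((1 : Matrix (Fin p) (Fin p) ℝ) - P)) ∂μ) →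
      (∫ ω, frobSq (Ξ k ω * P +
          ((Fintype.card ι : ℝ)⁻¹ • ∑ j, Ξ j ω) * ((1 : Matrix (Fin p) (Fin p) ℝ) - P)) ∂μ) =
        (1 -
          (((∫ ω, frobSq (Ξ k ω * ((1 : Matrix (Fin p) (Fin p) ℝ) - P)) ∂μ) -
              (Fintype.card ι : ℝ)⁻¹ ^ 2 *
                ∑ j, ∫ ω, frobSq (Ξ j ω * ((1 : Matrix (Fin p) (Fin p) ℝ) - P)) ∂μ) /
            (∫ ω, frobSq (Ξ k ω * ((1 : Matrix (Fin p) (Fin p) ℝ) - P)) ∂μ)) *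
          ((∫ ω, frobSq (Ξ k ω * ((1 : Matrix (Fin p) (Fin p) ℝ) - P)) ∂μ) /
            (∫ ω, frobSq (Ξ k ω) ∂μ))) *
        (∫ ω, frobSq (Ξ k ω) ∂μ)) := by
  set Q : Matrix (Fin p) (Fin p) ℝ := (1 : Matrix (Fin p) (Fin p) ℝ) - P with hQ
  set c : ℝ := (Fintype.card ι : ℝ)⁻¹ with hc
  -- pointwise orthogonal decomposition of the refined error
  have hpt : ∀ ω, frobSq (Ξ k ω * P + (c • ∑ j, Ξ j ω) * Q)
      = frobSq (Ξ k ω * P) + c ^ 2 * frobSq ((∑ j, Ξ j ω) * Q) := by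
    intro ω
    rw [frobSq_add_orth hPsymm hPidem, Matrix.smul_mul, frobSq_smul']
  have hintP : Integrable (fun ω => frobSq (Ξ k ω * P)) μ :=
    frobSq_mul_integrable P hmeas hsq k
  have hintSumQ : Integrable (fun ω => frobSq ((∑ j, Ξ j ω) * Q)) μ :=
    sumQ_integrable Q hmeas hindep hint hsq
  have hmain : (∫ ω, frobSq (Ξ k ω * P + (c • ∑ j, Ξ j ω) * Q) ∂μ)
      = (∫ ω, frobSq (Ξ k ω * P) ∂μ) + c ^ 2 * ∑ j, ∫ ω, frobSq (Ξ j ω * Q) ∂μ := by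
    simp_rw [hpt]
    rw [integral_add hintP (hintSumQ.const_mul _), integral_const_mul,
      core Q hmeas hindep hint hmean hsq]
  refine ⟨hmain, fun ha hb => ?_⟩
  -- the consequent form
  have hsplit : (∫ ω, frobSq (Ξ k ω) ∂μ)
      = (∫ ω, frobSq (Ξ k ω * P) ∂μ) + ∫ ω, frobSq (Ξ k ω * Q) ∂μ := by
    have hpt2 : ∀ ω, frobSq (Ξ k ω) = frobSq (Ξ k ω * P) + frobSq (Ξ k ω * Q) := by
      intro ω
      have : Ξ k ω = Ξ k ω * P + Ξ k ω * Q := by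
        rw [hQ, ← Matrix.mul_add]
        simp
      conv_lhs => rw [this]
      exact frobSq_add_orth hPsymm hPidem _ _
    simp_rw [hpt2]
    rw [integral_add hintP (frobSq_mul_integrable Q hmeas hsq k)]
  rw [hmain]
  set a : ℝ := ∫ ω, frobSq (Ξ k ω) ∂μ
  set b : ℝ := ∫ ω, frobSq (Ξ k ω * Q) ∂μ
  set s : ℝ := ∑ j, ∫ ω, frobSq (Ξ j ω * Q) ∂μ
  have hP' : (∫ ω, frobSq (Ξ k ω * P) ∂μ) = a - b := by rw [hsplit]; ring
  rw [hP']
  have ha' : a ≠ 0 := ne_of_gt ha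
  have hb' : b ≠ 0 := ne_of_gt hb
  field_simp
  ring
end
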